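/- Let x ∉ D ∪ D̃. If Σ_{k=1}^∞ g'_k(x) = +∞ then the upper Dini derivatives satisfy D⁺f_r(x) = D⁻f_r(x) = +∞; if Σ_{k=1}^∞ g'_k(x) = -∞ then the lower Dini derivatives satisfy d₊f_r(x) = d₋f_r(x) = -∞. -/

import Mathlib

open Set Filter MeasureTheory Metric Topology

/-- Distance from `x` to the nearest integer. -/
noncomputable def phiTW (x : ℝ) : ℝ := Metric.infDist x (Set.range (Int.cast : ℤ → ℝ))

/-- The Takagi–Van der Waerden function `f_r`. -/
noncomputable def fTW (r : ℕ) (x : ℝ) : ℝ :=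
  ∑' n : ℕ, (1 / (r : ℝ) ^ n) * phiTW ((r : ℝ) ^ n * x)

/-- `D_n = { k / r^(n-1) : k ∈ ℤ } ∩ [0,1]` (intended for `n ≥ 1`). -/
def DTW (r n : ℕ) : Set ℝ :=
  {y : ℝ | ∃ k : ℤ, y = (k : ℝ) / (r : ℝ) ^ (n - 1)} ∩ Set.Icc 0 1

/-- `g_n(x) = dist(x, D_n)`. -/
noncomputable def gTW (r n : ℕ) (x : ℝ) : ℝ := Metric.infDist x (DTW r n)

/-- `D̃_n`: midpoints of consecutive points of `D_n`. -/
def DtTW (r n : ℕ) : Set ℝ :=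
  {y : ℝ | ∃ k : ℤ, y = (2 * (k : ℝ) + 1) / (2 * (r : ℝ) ^ (n - 1))} ∩ Set.Icc 0 1

/-- `D = ⋃_{n ≥ 1} D_n`. -/
def DTWall (r : ℕ) : Set ℝ := ⋃ n ≥ 1, DTW r n

/-- `D̃ = ⋃_{n ≥ 1} D̃_n`. -/
def DtTWall (r : ℕ) : Set ℝ := ⋃ n ≥ 1, DtTW r n

/-!
On `[0, 1]` the level-`n` summand `r⁻ⁿ φ(rⁿ y)` of `f_r` coincides with `g_{n+1}`, and it is affine
(with slope `±1`) between consecutive points of the lattice `(2 rⁿ)⁻¹ ℤ`; `x` lies on none of these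
lattices. Fix a level `m`, let `t > 0` be the distance from `x` to the next point of the level-`m`
lattice and `N` the first level whose lattice spacing is `< t`. On `[x, x + t]` every level `< N`
is affine, so together they contribute exactly `t · ∑_{n<N} g'_{n+1}(x)`, while the levels `≥ N`
contribute at most `r⁻ᴺ < 2t`. So the difference quotient at `t` is within `2` of a partial sum of
`∑ g'_k(x)`, and as `m → ∞` we get `t → 0⁺` and `N → ∞`. Left quotients reduce to right ones
through the symmetry `f_r(-y) = f_r(y)`.
-/

theorem HasDerivAt.sub_eq_mul_sub_of_affineOn {f : ℝ → ℝ} {σ a b p q x z : ℝ}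
    (hd : HasDerivAt f σ x) (hf : ∀ y ∈ Icc p q, f y = a * y + b) (hx : x ∈ Ioo p q)
    (hz : z ∈ Icc p q) : f z - f x = σ * (z - x) := by
  have hσ : σ = a := by
    have hlin : HasDerivAt (fun y => a * y + b) a x := by
      simpa using ((hasDerivAt_id x).const_mul a).add_const b
    refine hd.unique (hlin.congr_of_eventuallyEq ?_)
    filter_upwards [Ioo_mem_nhds hx.1 hx.2] with y hy using hf y (Ioo_subset_Icc_self hy)
  rw [hf z hz, hf x (Ioo_subset_Icc_self hx), hσ]
  ring

-- the least point of `c⁻¹ ℤ` strictly to the right of `x`, when `c > 0`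
noncomputable def nextPt (c x : ℝ) : ℝ := (⌊c * x⌋ + 1) / c

section nextPt

variable {c x : ℝ}

theorem lt_nextPt (hc : 0 < c) : x < nextPt c x := by
  rw [nextPt, lt_div_iff₀ hc]
  linarith [Int.lt_floor_add_one (c * x)]

theorem nextPt_sub_le (hc : 0 < c) : nextPt c x - x ≤ 1 / c := by
  rw [nextPt, div_sub' hc.ne', div_le_div_iff_of_pos_right hc]
  linarith [Int.floor_le (c * x)]

theorem floor_mul_div_lt (hc : 0 < c) (hx : ∀ j : ℤ, x ≠ j / c) : (⌊c * x⌋ : ℝ) / c < x := by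
  refine lt_of_le_of_ne ?_ (hx _).symm
  rw [div_le_iff₀ hc]
  linarith [Int.floor_le (c * x)]

theorem nextPt_mul_le (hc : 0 < c) {k : ℕ} (hk : 0 < k) : nextPt (c * k) x ≤ nextPt c x := by
  have hk' : (0 : ℝ) < k := by exact_mod_cast hk
  have hlt : ⌊c * k * x⌋ < k * (⌊c * x⌋ + 1) := by
    rw [Int.floor_lt]
    push_cast
    nlinarith [Int.lt_floor_add_one (c * x)]
  have hle : ((⌊c * k * x⌋ : ℤ) : ℝ) + 1 ≤ k * ((⌊c * x⌋ : ℝ) + 1) := by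
    exact_mod_cast hlt
  rw [nextPt, nextPt, div_le_iff₀ (by positivity)]
  calc ((⌊c * k * x⌋ : ℤ) : ℝ) + 1 ≤ k * ((⌊c * x⌋ : ℝ) + 1) := hle
    _ = (⌊c * x⌋ + 1) / c * (c * k) := by field_simp

theorem nextPt_mul_eq (hc : 0 < c) {k : ℕ} (hk : 0 < k) (h : nextPt c x - x ≤ 1 / (c * k)) :
    nextPt (c * k) x = nextPt c x := by
  have hk' : (0 : ℝ) < k := by exact_mod_cast hk
  have hlt := lt_nextPt (x := x) hc
  rw [nextPt, div_sub' hc.ne', div_le_div_iff₀ hc (by positivity)] at h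
  rw [nextPt, lt_div_iff₀ hc] at hlt
  have hfloor : ⌊c * k * x⌋ = k * (⌊c * x⌋ + 1) - 1 := by
    rw [Int.floor_eq_iff]
    push_cast
    constructor <;> nlinarith
  rw [nextPt, nextPt, hfloor]
  push_cast
  field_simp
  ring

end nextPt

section LimsupEReal

variable {α : Type*} {l : Filter α} {t : ℕ → α}

theorem limsup_coe_eq_top_of_tendsto_comp {Q : α → ℝ} (ht : Tendsto t atTop l)
    (hQ : Tendsto (Q ∘ t) atTop atTop) : limsup (fun a => (Q a : EReal)) l = ⊤ :=
  top_le_iff.1 <| calc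
    ⊤ = limsup (fun m => (Q (t m) : EReal)) atTop :=
      (EReal.tendsto_coe_atTop.comp hQ).limsup_eq.symm
    _ ≤ limsup (fun a => (Q a : EReal)) l := ht.limsup_comp_le_limsup (u := fun a => (Q a : EReal))

theorem liminf_coe_eq_bot_of_tendsto_comp {Q : α → ℝ} (ht : Tendsto t atTop l)
    (hQ : Tendsto (Q ∘ t) atTop atBot) : liminf (fun a => (Q a : EReal)) l = ⊥ :=
  le_bot_iff.1 <| calc
    liminf (fun a => (Q a : EReal)) l ≤ liminf (fun m => (Q (t m) : EReal)) atTop :=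
      ht.liminf_le_liminf_comp (u := fun a => (Q a : EReal))
    _ = ⊥ := (EReal.tendsto_coe_atBot.comp hQ).liminf_eq

theorem limsup_coe_eq_top_and_liminf_coe_eq_bot_of_abs_sub_le (Q : α → ℝ) (S : ℕ → ℝ)
    {N : ℕ → ℕ} {C : ℝ}
    (ht : Tendsto t atTop l) (hN : Tendsto N atTop atTop) (hQ : ∀ m, |Q (t m) - S (N m)| ≤ C) :
    (Tendsto S atTop atTop → limsup (fun a => (Q a : EReal)) l = ⊤) ∧
      (Tendsto S atTop atBot → liminf (fun a => (Q a : EReal)) l = ⊥) := by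
  have hsplit : (fun m => Q (t m) - S (N m) + S (N m)) = Q ∘ t := funext fun m => sub_add_cancel _ _
  refine ⟨fun hS => limsup_coe_eq_top_of_tendsto_comp ht ?_,
    fun hS => liminf_coe_eq_bot_of_tendsto_comp ht ?_⟩
  · exact hsplit ▸ tendsto_atTop_add_left_of_le _ (-C) (fun m => (abs_le.1 (hQ m)).1) (hS.comp hN)
  · exact hsplit ▸ tendsto_atBot_add_left_of_ge _ C (fun m => (abs_le.1 (hQ m)).2) (hS.comp hN)

end LimsupEReal

theorem sum_range_add_one_eq_sum_Icc {M : Type*} [AddCommMonoid M] (s : ℕ → M) (N : ℕ) :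
    ∑ n ∈ Finset.range N, s (n + 1) = ∑ k ∈ Finset.Icc 1 N, s k := by
  rw [Finset.range_eq_Ico, Finset.sum_Ico_add' s 0 N 1, Finset.Ico_add_one_right_eq_Icc, zero_add]

theorem phiTW_eq_abs_sub_round (y : ℝ) : phiTW y = |y - round y| := by
  rw [phiTW]
  refine le_antisymm ?_ ((le_infDist (s := range (Int.cast : ℤ → ℝ)) ⟨0, 0, Int.cast_zero⟩).2 ?_)
  · simpa [Real.dist_eq] using
      infDist_le_dist_of_mem (mem_range_self (f := (Int.cast : ℤ → ℝ)) (round y))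
  · rintro _ ⟨j, rfl⟩
    simpa [Real.dist_eq] using round_le y j

theorem phiTW_le_abs_sub (y : ℝ) (j : ℤ) : phiTW y ≤ |y - j| :=
  phiTW_eq_abs_sub_round y ▸ round_le y j

theorem phiTW_nonneg (y : ℝ) : 0 ≤ phiTW y := infDist_nonneg

theorem phiTW_le_half (y : ℝ) : phiTW y ≤ 1 / 2 :=
  phiTW_eq_abs_sub_round y ▸ abs_sub_round y

theorem phiTW_neg (y : ℝ) : phiTW (-y) = phiTW y := by
  have key : ∀ y, phiTW (-y) ≤ phiTW y := fun y => by
    calc phiTW (-y) ≤ |-y - ((-round y : ℤ) : ℝ)| := phiTW_le_abs_sub _ _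
      _ = phiTW y := by rw [phiTW_eq_abs_sub_round, ← abs_neg]; push_cast; ring_nf
  exact le_antisymm (key y) (by simpa using key (-y))

theorem phiTW_eq_abs_sub {y : ℝ} {i : ℤ} (h : |y - i| ≤ 1 / 2) : phiTW y = |y - i| := by
  refine le_antisymm (phiTW_le_abs_sub y i) ?_
  rw [phiTW_eq_abs_sub_round]
  rcases eq_or_ne (round y) i with hi | hi
  · rw [hi]
  · have h1 : (1 : ℝ) ≤ |(round y : ℝ) - i| := by
      exact_mod_cast Int.one_le_abs (sub_ne_zero.2 hi)
    have h2 := abs_sub_le (round y : ℝ) y i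
    rw [abs_sub_comm (round y : ℝ) y] at h2
    linarith

theorem phiTW_affineOn_halfCell (j : ℤ) :
    ∃ a b : ℝ, ∀ y ∈ Icc ((j : ℝ) / 2) ((j + 1) / 2), phiTW y = a * y + b := by
  obtain ⟨i, rfl | rfl⟩ := Int.even_or_odd' j
  · refine ⟨1, -i, fun y hy => ?_⟩
    push_cast at hy
    have h0 : 0 ≤ y - i := by linarith [hy.1]
    rw [phiTW_eq_abs_sub (by rw [abs_of_nonneg h0]; linarith [hy.2]), abs_of_nonneg h0]
    ring
  · refine ⟨-1, i + 1, fun y hy => ?_⟩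
    push_cast at hy
    have h0 : y - ((i + 1 : ℤ) : ℝ) ≤ 0 := by push_cast; linarith [hy.2]
    rw [phiTW_eq_abs_sub (by rw [abs_of_nonpos h0]; push_cast; linarith [hy.1]),
      abs_of_nonpos h0]
    push_cast
    ring

noncomputable def twTerm (r n : ℕ) (y : ℝ) : ℝ := (1 / (r : ℝ) ^ n) * phiTW ((r : ℝ) ^ n * y)

theorem fTW_eq_tsum_twTerm (r : ℕ) (y : ℝ) : fTW r y = ∑' n, twTerm r n y := rfl

section

variable {r : ℕ}

theorem twTerm_nonneg (n : ℕ) (y : ℝ) : 0 ≤ twTerm r n y :=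
  mul_nonneg (by positivity) (phiTW_nonneg _)

theorem twTerm_le (n : ℕ) (y : ℝ) : twTerm r n y ≤ 1 / (2 * (r : ℝ) ^ n) := by
  calc twTerm r n y ≤ 1 / (r : ℝ) ^ n * (1 / 2) :=
        mul_le_mul_of_nonneg_left (phiTW_le_half _) (by positivity)
    _ = 1 / (2 * (r : ℝ) ^ n) := by rw [one_div_mul_one_div, mul_comm]

theorem twTerm_neg (n : ℕ) (y : ℝ) : twTerm r n (-y) = twTerm r n y := by
  rw [twTerm, twTerm, mul_neg, phiTW_neg]

theorem fTW_neg (y : ℝ) : fTW r (-y) = fTW r y :=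
  tsum_congr fun n => twTerm_neg n y

theorem twTerm_affineOn_halfCell (hr : 0 < r) (n : ℕ) (j : ℤ) :
    ∃ a b : ℝ, ∀ y ∈ Icc ((j : ℝ) / (2 * (r : ℝ) ^ n)) ((j + 1) / (2 * (r : ℝ) ^ n)),
      twTerm r n y = a * y + b := by
  obtain ⟨a, b, h⟩ := phiTW_affineOn_halfCell j
  refine ⟨a, b / (r : ℝ) ^ n, fun y ⟨hy1, hy2⟩ => ?_⟩
  rw [div_le_iff₀ (by positivity)] at hy1
  rw [le_div_iff₀ (by positivity)] at hy2
  rw [twTerm, h _ ⟨by rw [div_le_iff₀ two_pos]; linarith, by rw [le_div_iff₀ two_pos]; linarith⟩]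
  field_simp

theorem summable_twTerm (hr : 2 ≤ r) (y : ℝ) : Summable fun n => twTerm r n y := by
  have hr1 : (1 : ℝ) < r := by exact_mod_cast hr
  refine Summable.of_nonneg_of_le (fun n => twTerm_nonneg n y) (fun n => ?_)
    ((summable_geometric_of_lt_one (by positivity) ((div_lt_one (by positivity)).2 hr1)).mul_left
      (1 / 2))
  calc twTerm r n y ≤ 1 / (2 * (r : ℝ) ^ n) := twTerm_le n y
    _ = 1 / 2 * (1 / (r : ℝ)) ^ n := by rw [div_pow, one_pow, one_div_mul_one_div]

theorem abs_tsum_twTerm_sub_le (hr : 2 ≤ r) (N : ℕ) (y z : ℝ) :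
    |∑' i, (twTerm r (i + N) z - twTerm r (i + N) y)| ≤ 1 / (r : ℝ) ^ N := by
  have hr1 : (1 : ℝ) < r := by exact_mod_cast hr
  have hgeo : HasSum (fun i : ℕ => 1 / (2 * (r : ℝ) ^ N) * (1 / (r : ℝ)) ^ i)
      (1 / (2 * (r : ℝ) ^ N) * (1 - 1 / (r : ℝ))⁻¹) :=
    (hasSum_geometric_of_lt_one (by positivity) ((div_lt_one (by positivity)).2 hr1)).mul_left _
  have hbound : ∀ i : ℕ, ‖twTerm r (i + N) z - twTerm r (i + N) y‖ ≤
      1 / (2 * (r : ℝ) ^ N) * (1 / (r : ℝ)) ^ i := by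
    intro i
    have e : 1 / (2 * (r : ℝ) ^ N) * (1 / (r : ℝ)) ^ i = 1 / (2 * (r : ℝ) ^ (i + N)) := by
      rw [div_pow, one_pow, one_div_mul_one_div, pow_add]
      ring
    rw [e, Real.norm_eq_abs, abs_sub_le_iff]
    constructor <;>
      linarith [twTerm_le (r := r) (i + N) z, twTerm_nonneg (r := r) (i + N) y,
        twTerm_le (r := r) (i + N) y, twTerm_nonneg (r := r) (i + N) z]
  have hfactor : (1 - 1 / (r : ℝ))⁻¹ ≤ 2 := by
    rw [inv_le_comm₀ (by rw [sub_pos, div_lt_one (by positivity)]; exact hr1) two_pos,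
      le_sub_comm, div_le_iff₀ (by positivity)]
    have : (2 : ℝ) ≤ r := by exact_mod_cast hr
    linarith
  calc _ ≤ 1 / (2 * (r : ℝ) ^ N) * (1 - 1 / (r : ℝ))⁻¹ := tsum_of_norm_bounded hgeo hbound
    _ ≤ 1 / (2 * (r : ℝ) ^ N) * 2 := by gcongr
    _ = 1 / (r : ℝ) ^ N := by field_simp

theorem abs_fTW_sub_sub_sum_le (hr : 2 ≤ r) (N : ℕ) (y z : ℝ) :
    |fTW r z - fTW r y - ∑ n ∈ Finset.range N, (twTerm r n z - twTerm r n y)| ≤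
      1 / (r : ℝ) ^ N := by
  have hsum := (summable_twTerm hr z).sub (summable_twTerm hr y)
  rw [fTW_eq_tsum_twTerm, fTW_eq_tsum_twTerm,
    ← (summable_twTerm hr z).tsum_sub (summable_twTerm hr y), ← hsum.sum_add_tsum_nat_add N,
    add_sub_cancel_left]
  exact abs_tsum_twTerm_sub_le hr N y z

theorem nextPt_le_nextPt_of_sub_le (hr : 0 < r) {x : ℝ} {m n : ℕ}
    (h : nextPt (2 * (r : ℝ) ^ m) x - x ≤ 1 / (2 * (r : ℝ) ^ n)) :
    nextPt (2 * (r : ℝ) ^ m) x ≤ nextPt (2 * (r : ℝ) ^ n) x := by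
  have hscale : ∀ {a b : ℕ}, a ≤ b →
      (2 : ℝ) * (r : ℝ) ^ b = 2 * (r : ℝ) ^ a * ((r ^ (b - a) : ℕ) : ℝ) :=
    fun hab => by push_cast; rw [mul_assoc, ← pow_add, Nat.add_sub_cancel' hab]
  rcases le_total n m with hnm | hmn
  · rw [hscale hnm]
    exact nextPt_mul_le (by positivity) (by positivity)
  · rw [hscale hmn] at h ⊢
    exact (nextPt_mul_eq (by positivity) (by positivity) h).ge

theorem twTerm_add_sub_eq_mul (hr : 0 < r) {m n : ℕ} {x σ t : ℝ}
    (hx : ∀ j : ℤ, x ≠ j / (2 * (r : ℝ) ^ n)) (hσ : HasDerivAt (twTerm r n) σ x)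
    (ht : x + t = nextPt (2 * (r : ℝ) ^ m) x) (htn : t ≤ 1 / (2 * (r : ℝ) ^ n)) :
    twTerm r n (x + t) - twTerm r n x = σ * t := by
  have hc : (0 : ℝ) < 2 * (r : ℝ) ^ n := by positivity
  have hxt : x < x + t := ht ▸ lt_nextPt (by positivity)
  have hnext : x + t ≤ nextPt (2 * (r : ℝ) ^ n) x :=
    ht ▸ nextPt_le_nextPt_of_sub_le hr (by rw [← ht, add_sub_cancel_left]; exact htn)
  obtain ⟨a, b, hab⟩ := twTerm_affineOn_halfCell hr n ⌊2 * (r : ℝ) ^ n * x⌋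
  have := hσ.sub_eq_mul_sub_of_affineOn hab ⟨floor_mul_div_lt hc hx, lt_nextPt hc⟩
    ⟨(floor_mul_div_lt hc hx).trans hxt |>.le, hnext⟩
  rwa [add_sub_cancel_left] at this

theorem exists_abs_slope_fTW_sub_sum_le (hr : 2 ≤ r) {x : ℝ}
    (hx : ∀ (n : ℕ) (j : ℤ), x ≠ j / (2 * (r : ℝ) ^ n)) {σ : ℕ → ℝ}
    (hσ : ∀ n, HasDerivAt (twTerm r n) (σ n) x) (m : ℕ) :
    ∃ t ∈ Ioc 0 (1 / (2 * (r : ℝ) ^ m)), ∃ N ≥ m,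
      |(fTW r (x + t) - fTW r x) / t - ∑ n ∈ Finset.range N, σ n| ≤ 2 := by
  have hr0 : 0 < r := by omega
  have hr1 : (1 : ℝ) < r := by exact_mod_cast hr
  have hcm : (0 : ℝ) < 2 * (r : ℝ) ^ m := by positivity
  obtain ⟨t, ht⟩ : ∃ t, x + t = nextPt (2 * (r : ℝ) ^ m) x := ⟨_, add_sub_cancel x _⟩
  have ht0 : 0 < t := by linarith [lt_nextPt (x := x) hcm]
  have htm : t ≤ 1 / (2 * (r : ℝ) ^ m) := by linarith [nextPt_sub_le (x := x) hcm]
  have h2t : 2 * (r : ℝ) ^ m * t ≤ 1 := by rwa [le_div_iff₀ hcm, mul_comm] at htm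
  obtain ⟨k, hk, hk1⟩ := exists_nat_pow_near (x := 1 / (2 * (r : ℝ) ^ m * t))
    ((one_le_div (by positivity)).2 h2t) hr1
  rw [le_div_iff₀ (by positivity)] at hk
  rw [div_lt_iff₀ (by positivity)] at hk1
  have hhead : ∀ n ∈ Finset.range (m + k + 1),
      twTerm r n (x + t) - twTerm r n x = σ n * t := by
    intro n hn
    have hn : n ≤ m + k := Nat.lt_succ_iff.1 (Finset.mem_range.1 hn)
    have hpow : (r : ℝ) ^ n ≤ (r : ℝ) ^ m * (r : ℝ) ^ k := by
      rw [← pow_add]; exact pow_le_pow_right₀ hr1.le hn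
    refine twTerm_add_sub_eq_mul hr0 (hx n) (hσ n) ht ?_
    rw [le_div_iff₀ (by positivity)]
    nlinarith
  have hest := abs_fTW_sub_sub_sum_le hr (m + k + 1) x (x + t)
  rw [Finset.sum_congr rfl hhead, ← Finset.sum_mul] at hest
  refine ⟨t, ⟨ht0, htm⟩, m + k + 1, by omega, ?_⟩
  have htail : 1 / (r : ℝ) ^ (m + k + 1) ≤ 2 * t := by
    rw [div_le_iff₀ (by positivity), show m + k + 1 = (k + 1) + m by ring, pow_add]
    linarith
  have hquot : (fTW r (x + t) - fTW r x) / t - ∑ n ∈ Finset.range (m + k + 1), σ n =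
      (fTW r (x + t) - fTW r x - (∑ n ∈ Finset.range (m + k + 1), σ n) * t) / t := by
    field_simp
  rw [hquot, abs_div, abs_of_pos ht0, div_le_iff₀ ht0]
  linarith

theorem exists_seq_nhdsGT_abs_slope_fTW_sub_sum_le (hr : 2 ≤ r) {x : ℝ}
    (hx : ∀ (n : ℕ) (j : ℤ), x ≠ j / (2 * (r : ℝ) ^ n)) {σ : ℕ → ℝ}
    (hσ : ∀ n, HasDerivAt (twTerm r n) (σ n) x) :
    ∃ (t : ℕ → ℝ) (N : ℕ → ℕ), Tendsto t atTop (𝓝[>] 0) ∧ Tendsto N atTop atTop ∧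
      ∀ m, |(fTW r (x + t m) - fTW r x) / t m - ∑ n ∈ Finset.range (N m), σ n| ≤ 2 := by
  choose t ht N hN hQ using exists_abs_slope_fTW_sub_sum_le hr hx hσ
  have hr1 : (1 : ℝ) < r := by exact_mod_cast hr
  have hbound : Tendsto (fun m : ℕ => 1 / 2 * (1 / (r : ℝ)) ^ m) atTop (𝓝 0) := by
    simpa using (tendsto_pow_atTop_nhds_zero_of_lt_one (by positivity)
      ((div_lt_one (by positivity)).2 hr1)).const_mul (1 / 2 : ℝ)
  refine ⟨t, N, tendsto_nhdsWithin_iff.2 ⟨squeeze_zero (fun m => (ht m).1.le) (fun m => ?_) hbound,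
    Eventually.of_forall fun m => (ht m).1⟩, tendsto_atTop_mono hN tendsto_id, hQ⟩
  calc t m ≤ 1 / (2 * (r : ℝ) ^ m) := (ht m).2
    _ = 1 / 2 * (1 / (r : ℝ)) ^ m := by rw [div_pow, one_pow, one_div_mul_one_div]

theorem exists_seq_nhdsLT_abs_slope_fTW_sub_sum_le (hr : 2 ≤ r) {x : ℝ}
    (hx : ∀ (n : ℕ) (j : ℤ), x ≠ j / (2 * (r : ℝ) ^ n)) {σ : ℕ → ℝ}
    (hσ : ∀ n, HasDerivAt (twTerm r n) (σ n) x) :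
    ∃ (t : ℕ → ℝ) (N : ℕ → ℕ), Tendsto t atTop (𝓝[<] 0) ∧ Tendsto N atTop atTop ∧
      ∀ m, |(fTW r (x + t m) - fTW r x) / t m - ∑ n ∈ Finset.range (N m), σ n| ≤ 2 := by
  have hx' : ∀ (n : ℕ) (j : ℤ), -x ≠ j / (2 * (r : ℝ) ^ n) := fun n j h =>
    hx n (-j) (by push_cast; rw [neg_div, ← h, neg_neg])
  have hσ' : ∀ n, HasDerivAt (twTerm r n) (-σ n) (-x) := fun n => by
    have h := ((neg_neg x).symm ▸ hσ n : HasDerivAt (twTerm r n) (σ n) (-(-x))).comp (-x)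
      (hasDerivAt_neg (-x))
    rwa [show twTerm r n ∘ Neg.neg = twTerm r n from funext (twTerm_neg n), mul_neg_one] at h
  obtain ⟨t, N, ht, hN, hQ⟩ := exists_seq_nhdsGT_abs_slope_fTW_sub_sum_le hr hx' hσ'
  have ht' := (tendsto_neg_nhdsGT (a := (0 : ℝ))).comp ht
  rw [neg_zero] at ht'
  refine ⟨fun m => -t m, N, ht', hN, fun m => ?_⟩
  rw [← abs_neg, ← fTW_neg (x + -t m), ← fTW_neg x (r := r)]
  convert hQ m using 2
  rw [Finset.sum_neg_distrib]
  ring_nf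

theorem gTW_succ_eqOn_twTerm (hr : 0 < r) (n : ℕ) :
    EqOn (gTW r (n + 1)) (twTerm r n) (Icc 0 1) := by
  intro y ⟨hy0, hy1⟩
  have hp : (0 : ℝ) < (r : ℝ) ^ n := by positivity
  have hD : DTW r (n + 1) = {z : ℝ | ∃ k : ℤ, z = k / (r : ℝ) ^ n} ∩ Icc 0 1 := by simp [DTW]
  have hscale : ∀ k : ℝ, 1 / (r : ℝ) ^ n * |(r : ℝ) ^ n * y - k| = |y - k / (r : ℝ) ^ n| := by
    intro k
    rw [← abs_of_pos (one_div_pos.2 hp), ← abs_mul]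
    congr 1
    field_simp
  have hterm : twTerm r n y = |y - round ((r : ℝ) ^ n * y) / (r : ℝ) ^ n| := by
    rw [twTerm, phiTW_eq_abs_sub_round, hscale]
  -- the nearest point `round (rⁿ y) / rⁿ` of `(rⁿ)⁻¹ ℤ` to `y ∈ [0, 1]` lies in `[0, 1]`
  have hround0 : 0 ≤ round ((r : ℝ) ^ n * y) := by
    rw [round_eq]; exact Int.floor_nonneg.2 (by positivity)
  have hround1 : round ((r : ℝ) ^ n * y) ≤ round (((r ^ n : ℕ) : ℝ)) := by
    rw [round_eq, round_eq]
    exact Int.floor_mono (by push_cast; nlinarith)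
  rw [round_natCast] at hround1
  rw [gTW, hterm]
  refine le_antisymm ?_ ((le_infDist ⟨0, hD ▸ ⟨⟨0, by simp⟩, le_rfl, zero_le_one⟩⟩).2 ?_)
  · rw [← Real.dist_eq]
    refine infDist_le_dist_of_mem (hD ▸ ⟨⟨_, rfl⟩, by positivity, ?_⟩)
    rw [div_le_one hp]
    exact_mod_cast hround1
  · rintro _ hz
    rw [hD] at hz
    obtain ⟨⟨k, rfl⟩, -⟩ := hz
    rw [Real.dist_eq, ← hterm]
    calc twTerm r n y ≤ 1 / (r : ℝ) ^ n * |(r : ℝ) ^ n * y - k| :=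
          mul_le_mul_of_nonneg_left (phiTW_le_abs_sub _ k) (by positivity)
      _ = |y - k / (r : ℝ) ^ n| := hscale k

theorem mem_Ioo_of_notMem_DTWall {x : ℝ} (hx : x ∈ Icc (0 : ℝ) 1) (hxD : x ∉ DTWall r) :
    x ∈ Ioo 0 1 := by
  have hD : ∀ k : ℤ, (k : ℝ) ∈ Icc (0 : ℝ) 1 → (k : ℝ) ∈ DTWall r := fun k hk =>
    mem_iUnion₂.2 ⟨1, le_rfl, ⟨k, by simp⟩, hk⟩
  refine ⟨hx.1.lt_of_ne fun h => hxD ?_, hx.2.lt_of_ne fun h => hxD ?_⟩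
  · simpa [← h] using hD 0 (by simp)
  · simpa [h] using hD 1 (by simp)

-- `j / (2 rⁿ)` lies in `D_{n+1}` for even `j` and in `D̃_{n+1}` for odd `j`
theorem ne_div_of_notMem_DTWall_union {x : ℝ} (hx : x ∈ Icc (0 : ℝ) 1)
    (hxD : x ∉ DTWall r ∪ DtTWall r) (n : ℕ) (j : ℤ) : x ≠ j / (2 * (r : ℝ) ^ n) := by
  rintro rfl
  obtain ⟨i, rfl | rfl⟩ := Int.even_or_odd' j
  · refine hxD (Or.inl (mem_iUnion₂.2 ⟨n + 1, by omega, ⟨i, ?_⟩, hx⟩))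
    simp only [Nat.add_sub_cancel]
    push_cast
    rw [mul_div_mul_left _ _ two_ne_zero]
  · exact hxD (Or.inr (mem_iUnion₂.2 ⟨n + 1, by omega, ⟨i, by simp⟩, hx⟩))

end

theorem stmt13 (r : ℕ) (hr : 2 ≤ r) (x : ℝ) (hx : x ∈ Set.Icc (0:ℝ) 1)
    (hxD : x ∉ DTWall r ∪ DtTWall r)
    (s : ℕ → ℝ) (hs : ∀ k, 1 ≤ k → HasDerivAt (gTW r k) (s k) x) :
    (Tendsto (fun N => ∑ k ∈ Finset.Icc 1 N, s k) atTop atTop →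
      Filter.limsup (fun t : ℝ => (((fTW r (x + t) - fTW r x) / t : ℝ) : EReal)) (𝓝[>] 0) = ⊤ ∧
      Filter.limsup (fun t : ℝ => (((fTW r (x + t) - fTW r x) / t : ℝ) : EReal)) (𝓝[<] 0) = ⊤) ∧
    (Tendsto (fun N => ∑ k ∈ Finset.Icc 1 N, s k) atTop atBot →
      Filter.liminf (fun t : ℝ => (((fTW r (x + t) - fTW r x) / t : ℝ) : EReal)) (𝓝[>] 0) = ⊥ ∧
      Filter.liminf (fun t : ℝ => (((fTW r (x + t) - fTW r x) / t : ℝ) : EReal)) (𝓝[<] 0) = ⊥) := by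
  have hx01 := mem_Ioo_of_notMem_DTWall hx fun h => hxD (Or.inl h)
  have hlat := ne_div_of_notMem_DTWall_union hx hxD
  have hderiv : ∀ n, HasDerivAt (twTerm r n) (s (n + 1)) x := fun n =>
    (hs (n + 1) (by omega)).congr_of_eventuallyEq <| Filter.eventuallyEq_of_mem
      (Icc_mem_nhds hx01.1 hx01.2) (gTW_succ_eqOn_twTerm (by omega) n).symm
  obtain ⟨tR, NR, htR, hNR, hQR⟩ := exists_seq_nhdsGT_abs_slope_fTW_sub_sum_le hr hlat hderiv
  obtain ⟨tL, NL, htL, hNL, hQL⟩ := exists_seq_nhdsLT_abs_slope_fTW_sub_sum_le hr hlat hderiv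
  simp only [sum_range_add_one_eq_sum_Icc] at hQR hQL
  let Q : ℝ → ℝ := fun t => (fTW r (x + t) - fTW r x) / t
  let S : ℕ → ℝ := fun N => ∑ k ∈ Finset.Icc 1 N, s k
  have right := limsup_coe_eq_top_and_liminf_coe_eq_bot_of_abs_sub_le Q S htR hNR hQR
  have left := limsup_coe_eq_top_and_liminf_coe_eq_bot_of_abs_sub_le Q S htL hNL hQL
  exact ⟨fun h => ⟨right.1 h, left.1 h⟩, fun h => ⟨right.2 h, left.2 h⟩⟩
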